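/- For λ ≥ 0, μ > 0, 0 < p < 1, and x₊ > 0, the period integral T(x₊) := 4∫₀¹ ds / √(λ(1−s²) + (2μ/(p+1)) x₊^{p−1}(1−s^{p+1})) is strictly increasing in x₊, and if λ > 0 then T(x₊) → 2π/√λ as x₊ → +∞ and T(x₊) → 0 as x₊ → 0⁺. -/

import Mathlib

/-!
With `c = (2μ/(p+1)) x₊^(p-1)` the period depends on `x₊` only through `c`, which decreases
strictly from `+∞` to `0` on `(0, ∞)` because `p < 1`. The integrand decreases strictly in `c`,
hence so does the period. Since `s^2 ≤ s` and `s^(p+1) ≤ s` on `[0, 1]`, the radicand is at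
least `(λ + c)(1 - s)`, giving the integrable majorant `(λ + c)^(-1/2) (1 - s)^(-1/2)`. It
forces the period to `0` as `c → ∞`, and for `λ > 0` dominated convergence gives the limit
`4 ∫₀¹ ds/√(λ(1 - s²)) = 2π/√λ` as `c → 0⁺`.
-/

open MeasureTheory Filter Topology Real Set

noncomputable def periodIntegrand (lam p c s : ℝ) : ℝ :=
  1 / √(lam * (1 - s ^ 2) + c * (1 - s ^ (p + 1)))

-- The period of the statement, as a function of `c = (2μ/(p+1)) x₊^(p-1)`.
noncomputable def period (lam p c : ℝ) : ℝ :=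
  4 * ∫ s in (0:ℝ)..1, periodIntegrand lam p c s

section
variable {lam p c s : ℝ}

lemma mul_one_sub_le_radicand (hlam : 0 ≤ lam) (hc : 0 ≤ c) (hp : 0 ≤ p)
    (hs : s ∈ Icc (0:ℝ) 1) :
    (lam + c) * (1 - s) ≤ lam * (1 - s ^ 2) + c * (1 - s ^ (p + 1)) := by
  have hsq : s ^ 2 ≤ s := by nlinarith [hs.1, hs.2]
  have hrpow : s ^ (p + 1) ≤ s := rpow_le_self_of_le_one hs.1 hs.2 (by linarith)
  linarith [mul_le_mul_of_nonneg_left hsq hlam, mul_le_mul_of_nonneg_left hrpow hc]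

lemma measurable_periodIntegrand : Measurable (periodIntegrand lam p c) := by
  unfold periodIntegrand; fun_prop

lemma periodIntegrand_one : periodIntegrand lam p c 1 = 0 := by
  simp [periodIntegrand]

lemma periodIntegrand_nonneg : 0 ≤ periodIntegrand lam p c s := by
  unfold periodIntegrand; positivity

lemma periodIntegrand_le (hlam : 0 ≤ lam) (hc : 0 ≤ c) (hp : 0 ≤ p)
    (hs : s ∈ Icc (0:ℝ) 1) :
    periodIntegrand lam p c s ≤ (√(lam + c))⁻¹ * (1 / √(1 - s)) := by
  rcases (add_nonneg hlam hc).eq_or_lt with hlc | hlc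
  · obtain ⟨rfl, rfl⟩ : lam = 0 ∧ c = 0 := ⟨by linarith, by linarith⟩
    simp [periodIntegrand]
  rcases hs.2.eq_or_lt with rfl | hs1
  · simp [periodIntegrand_one]
  calc periodIntegrand lam p c s ≤ 1 / √((lam + c) * (1 - s)) :=
        one_div_le_one_div_of_le (sqrt_pos.2 (mul_pos hlc (sub_pos.2 hs1)))
          (sqrt_le_sqrt (mul_one_sub_le_radicand hlam hc hp hs))
    _ = (√(lam + c))⁻¹ * (1 / √(1 - s)) := by rw [sqrt_mul hlc.le]; ring

lemma periodIntegrand_lt_of_lt {c' : ℝ} (hlam : 0 ≤ lam) (hp : 0 ≤ p) (hc : 0 < c)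
    (hcc' : c < c') (hs : s ∈ Ico (0:ℝ) 1) :
    periodIntegrand lam p c' s < periodIntegrand lam p c s := by
  have hrpow : s ^ (p + 1) < 1 := rpow_lt_one hs.1 hs.2 (by linarith)
  have hpos : 0 < lam * (1 - s ^ 2) + c * (1 - s ^ (p + 1)) :=
    (mul_pos (add_pos_of_nonneg_of_pos hlam hc) (sub_pos.2 hs.2)).trans_le
      (mul_one_sub_le_radicand hlam hc.le hp (Ico_subset_Icc_self hs))
  unfold periodIntegrand
  gcongr

lemma intervalIntegrable_one_div_sqrt_one_sub :
    IntervalIntegrable (fun s : ℝ => 1 / √(1 - s)) volume 0 1 := by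
  have h : IntervalIntegrable (fun s : ℝ => (1 - s) ^ (-(1 / 2) : ℝ)) volume 0 1 := by
    simpa using ((intervalIntegral.intervalIntegrable_rpow' (a := 0) (b := 1) (r := -(1 / 2))
      (by norm_num)).comp_sub_left 1).symm
  refine h.congr fun s hs => ?_
  rw [uIoc_of_le zero_le_one] at hs
  rw [sqrt_eq_rpow, rpow_neg (sub_nonneg.2 hs.2), inv_eq_one_div]

lemma intervalIntegrable_periodIntegrand (hlam : 0 ≤ lam) (hc : 0 ≤ c) (hp : 0 ≤ p) :
    IntervalIntegrable (periodIntegrand lam p c) volume 0 1 := by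
  refine (intervalIntegrable_one_div_sqrt_one_sub.const_mul (√(lam + c))⁻¹).mono_fun'
    measurable_periodIntegrand.aestronglyMeasurable ?_
  rw [uIoc_of_le zero_le_one]
  filter_upwards [ae_restrict_mem measurableSet_Ioc] with s hs
  rw [norm_of_nonneg periodIntegrand_nonneg]
  exact periodIntegrand_le hlam hc hp (Ioc_subset_Icc_self hs)

theorem period_strictAntiOn (hlam : 0 ≤ lam) (hp : 0 ≤ p) :
    StrictAntiOn (period lam p) (Ioi 0) := by
  intro c (hc : 0 < c) c' _ hcc'
  refine mul_lt_mul_of_pos_left ?_ four_pos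
  refine intervalIntegral.integral_lt_integral_of_ae_le_of_measure_setOfPred_lt_ne_zero
    zero_le_one (intervalIntegrable_periodIntegrand hlam (hc.trans hcc').le hp)
    (intervalIntegrable_periodIntegrand hlam hc.le hp) ?_ ?_
  · filter_upwards [ae_restrict_mem measurableSet_Ioc] with s hs
    rcases hs.2.eq_or_lt with rfl | hs1
    · simp [periodIntegrand_one]
    · exact (periodIntegrand_lt_of_lt hlam hp hc hcc' ⟨hs.1.le, hs1⟩).le
  · have hsub : Ioo (0:ℝ) 1 ⊆
        {s | periodIntegrand lam p c' s < periodIntegrand lam p c s} ∩ Ioc 0 1 := fun s hs =>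
      ⟨periodIntegrand_lt_of_lt hlam hp hc hcc' (Ioo_subset_Ico_self hs),
        Ioo_subset_Ioc_self hs⟩
    rw [Measure.restrict_apply' measurableSet_Ioc]
    exact ((measure_mono hsub).trans_lt' (by simp)).ne'

lemma integral_one_div_sqrt_one_sub_sq :
    ∫ s in (0:ℝ)..1, 1 / √(1 - s ^ 2) = π / 2 := by
  have hint : IntervalIntegrable (fun s : ℝ => 1 / √(1 - s ^ 2)) volume 0 1 := by
    have h := intervalIntegrable_periodIntegrand (lam := 1) (p := 0) zero_le_one le_rfl le_rfl
    exact h.congr fun s _ => by simp [periodIntegrand]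
  rw [intervalIntegral.integral_eq_sub_of_hasDeriv_right_of_le zero_le_one
    continuous_arcsin.continuousOn
    (fun s hs => (hasDerivAt_arcsin (by linarith [hs.1]) hs.2.ne).hasDerivWithinAt) hint,
    arcsin_one, arcsin_zero, sub_zero]

lemma continuousAt_periodIntegrand_zero (hlam : 0 < lam) (hs : s ∈ Icc (0:ℝ) 1) :
    ContinuousAt (fun c => periodIntegrand lam p c s) 0 := by
  rcases hs.2.eq_or_lt with rfl | hs1
  · simp only [periodIntegrand_one]
    exact continuousAt_const
  have hrad : 0 < lam * (1 - s ^ 2) := mul_pos hlam (by nlinarith [hs.1])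
  unfold periodIntegrand
  exact continuousAt_const.div (by fun_prop)
    (by rw [zero_mul, add_zero]; exact (sqrt_pos.2 hrad).ne')

theorem tendsto_period_nhdsGT_zero (hlam : 0 < lam) (hp : 0 ≤ p) :
    Tendsto (period lam p) (𝓝[>] 0) (𝓝 (2 * π / √lam)) := by
  have hlim : 4 * ∫ s in (0:ℝ)..1, periodIntegrand lam p 0 s = 2 * π / √lam := by
    have h : ∀ s, periodIntegrand lam p 0 s = (√lam)⁻¹ * (1 / √(1 - s ^ 2)) := fun s => by
      rw [periodIntegrand, zero_mul, add_zero, sqrt_mul hlam.le]; ring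
    simp_rw [h, intervalIntegral.integral_const_mul, integral_one_div_sqrt_one_sub_sq]
    ring
  rw [← hlim]
  refine (intervalIntegral.tendsto_integral_filter_of_dominated_convergence
    (fun s => (√lam)⁻¹ * (1 / √(1 - s))) (Eventually.of_forall fun _ =>
      measurable_periodIntegrand.aestronglyMeasurable) ?_
    (intervalIntegrable_one_div_sqrt_one_sub.const_mul _) ?_).const_mul 4
  · filter_upwards [self_mem_nhdsWithin] with c (hc : 0 < c)
    refine ae_of_all _ fun s hs => ?_
    rw [uIoc_of_le zero_le_one] at hs
    rw [norm_of_nonneg periodIntegrand_nonneg]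
    refine (periodIntegrand_le hlam.le hc.le hp (Ioc_subset_Icc_self hs)).trans ?_
    gcongr
    linarith
  · refine ae_of_all _ fun s hs => ?_
    rw [uIoc_of_le zero_le_one] at hs
    exact (continuousAt_periodIntegrand_zero hlam (Ioc_subset_Icc_self hs)).tendsto.mono_left
      nhdsWithin_le_nhds

theorem tendsto_period_atTop (hlam : 0 ≤ lam) (hp : 0 ≤ p) :
    Tendsto (period lam p) atTop (𝓝 0) := by
  set M := ∫ s in (0:ℝ)..1, 1 / √(1 - s)
  have hbound : Tendsto (fun c => 4 * ((√(lam + c))⁻¹ * M)) atTop (𝓝 0) := by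
    simpa using ((tendsto_inv_atTop_zero.comp (tendsto_sqrt_atTop.comp
      (tendsto_atTop_add_const_left _ lam tendsto_id))).mul_const M).const_mul 4
  refine squeeze_zero' (Eventually.of_forall fun c => ?_) ?_ hbound
  · exact mul_nonneg four_pos.le
      (intervalIntegral.integral_nonneg zero_le_one fun s _ => periodIntegrand_nonneg)
  filter_upwards [eventually_ge_atTop 0] with c hc
  refine mul_le_mul_of_nonneg_left ?_ four_pos.le
  rw [← intervalIntegral.integral_const_mul]
  exact intervalIntegral.integral_mono_on zero_le_one
    (intervalIntegrable_periodIntegrand hlam hc hp)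
    (intervalIntegrable_one_div_sqrt_one_sub.const_mul _)
    fun s hs => periodIntegrand_le hlam hc hp hs

end

/-- For `λ ≥ 0`, `μ > 0`, `0 < p < 1`, the period integral
`T(x₊) = 4∫₀¹ ds/√(λ(1−s²) + (2μ/(p+1)) x₊^{p−1}(1−s^{p+1}))` is strictly
increasing in `x₊`, and if `λ > 0` then `T(x₊) → 2π/√λ` as `x₊ → ∞` and
`T(x₊) → 0` as `x₊ → 0⁺`. -/
theorem stmt10 (lam μ p : ℝ) (hlam : 0 ≤ lam) (hμ : 0 < μ)
    (hp0 : 0 < p) (hp1 : p < 1) :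
    StrictMonoOn (fun x : ℝ =>
      4 * ∫ s in (0:ℝ)..1, 1 / Real.sqrt (lam * (1 - s ^ 2) +
        (2 * μ / (p + 1)) * x ^ (p - 1) * (1 - s ^ (p + 1))))
      (Set.Ioi 0) ∧
    (0 < lam →
      Tendsto (fun x : ℝ =>
        4 * ∫ s in (0:ℝ)..1, 1 / Real.sqrt (lam * (1 - s ^ 2) +
          (2 * μ / (p + 1)) * x ^ (p - 1) * (1 - s ^ (p + 1))))
        atTop (𝓝 (2 * π / Real.sqrt lam)) ∧
      Tendsto (fun x : ℝ =>
        4 * ∫ s in (0:ℝ)..1, 1 / Real.sqrt (lam * (1 - s ^ 2) +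
          (2 * μ / (p + 1)) * x ^ (p - 1) * (1 - s ^ (p + 1))))
        (𝓝[>] 0) (𝓝 0)) := by
  have hK : 0 < 2 * μ / (p + 1) := div_pos (by linarith) (by linarith)
  set c : ℝ → ℝ := fun x => 2 * μ / (p + 1) * x ^ (p - 1)
  have hc_anti : StrictAntiOn c (Ioi 0) := fun x hx y _ hxy =>
    mul_lt_mul_of_pos_left (rpow_lt_rpow_of_neg hx hxy (by linarith)) hK
  have hc_maps : MapsTo c (Ioi 0) (Ioi 0) := fun x hx => mul_pos hK (rpow_pos_of_pos hx _)
  have hc_atTop : Tendsto c atTop (𝓝[>] 0) := by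
    refine tendsto_nhdsWithin_iff.2 ⟨?_, (eventually_gt_atTop 0).mono hc_maps⟩
    simpa using (tendsto_rpow_neg_atTop (y := 1 - p) (by linarith)).const_mul (2 * μ / (p + 1))
  have hc_zero : Tendsto c (𝓝[>] 0) atTop :=
    (tendsto_rpow_neg_nhdsGT_zero (by linarith)).const_mul_atTop hK
  exact ⟨(period_strictAntiOn hlam hp0.le).comp hc_anti hc_maps, fun hlam' =>
    ⟨(tendsto_period_nhdsGT_zero hlam' hp0.le).comp hc_atTop,
      (tendsto_period_atTop hlam hp0.le).comp hc_zero⟩⟩
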